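/- arXiv:2407.05392 — 7 statements merged into one kernel-verified Lean document; each statement's English description precedes it below -/
import Mathlib

section
/- Let M: {1,…,n} → E(H) be an observable (POVM) on a d-dimensional Hilbert space with n effects M_1,…,M_n summing to the identity. For a fixed input state ρ, the n! states ρ_π = Σ_k Tr[ρ M_{π(k)}] |k⟩⟨k| (π ranging over permutations of {1,…,n}), each with prior 1/n!, can be discriminated with optimal success probability (1/(n-1)!) · max_j Tr[ρ M_j]. -/
open Matrix Finset Equiv
open scoped ComplexOrder

/-- A density operator: positive semidefinite with unit trace. -/
def IsDensity {d : ℕ} (ρ : Matrix (Fin d) (Fin d) ℂ) : Prop :=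
  ρ.PosSemidef ∧ ρ.trace = 1

/-!
With `p j = Re Tr[ρ M_j]`, the `π`-th term of the success probability is at most
`max p · Re Tr T_π`, since the diagonal of a positive semidefinite `T_π` is nonnegative; as
`∑ π, T π = 1` these traces add up to `n`, so the success probability is at most
`n · max p / n! = max p / (n-1)!`. The bound is attained by reading off the outcome `k` and
guessing uniformly among the `(n-1)!` permutations sending `k` to a maximiser of `p`.
-/

open scoped Nat

namespace Equiv.Perm

variable {α : Type*} [Fintype α] [DecidableEq α]

theorem card_filter_apply_eq_eq_card_filter_apply_eq (a b c : α) :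
    #{π : Perm α | π a = b} = #{π : Perm α | π a = c} :=
  card_equiv (Equiv.mulLeft (swap b c)) fun π => by simp [swap_apply_eq_iff]

theorem card_filter_apply_eq [Nonempty α] (a b : α) :
    #{π : Perm α | π a = b} = (Fintype.card α - 1)! := by
  have hfibers : (Fintype.card α)! = Fintype.card α * #{π : Perm α | π a = b} := by
    rw [← Fintype.card_perm, ← card_univ,
      card_eq_sum_card_fiberwise (f := fun π : Perm α => π a) (t := univ) fun _ _ => mem_univ _]
    simp [card_filter_apply_eq_eq_card_filter_apply_eq a _ b]
  rw [← Nat.mul_factorial_pred Fintype.card_ne_zero] at hfibers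
  exact (Nat.eq_of_mul_eq_mul_left Fintype.card_pos hfibers).symm

end Equiv.Perm

namespace Matrix

variable {α : Type*} [Fintype α] [DecidableEq α]

theorem PosSemidef.re_trace_diagonal_mul_le {c : α → ℂ} {b : ℝ} (hc : ∀ k, (c k).re ≤ b)
    {T : Matrix α α ℂ} (hT : T.PosSemidef) :
    (diagonal c * T).trace.re ≤ b * T.trace.re := by
  simp only [trace, diag, diagonal_mul, Complex.re_sum, mul_sum]
  refine sum_le_sum fun k _ => ?_
  obtain ⟨hre, him⟩ := Complex.nonneg_iff.mp (hT.diag_nonneg (i := k))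
  rw [Complex.mul_re, ← him, mul_zero, sub_zero]
  exact mul_le_mul_of_nonneg_right (hc k) hre

end Matrix

section PermutedDiscrimination

variable {α : Type*} [Fintype α] [DecidableEq α]

/-- Success probability of the POVM `T` for the states `diagonal (c ∘ π)` with uniform priors. -/
noncomputable def permutedSuccessProb (c : α → ℂ) (T : Perm α → Matrix α α ℂ) : ℝ :=
  ((Fintype.card α)! : ℝ)⁻¹ * ∑ π, ((diagonal (fun k => c (π k)) * T π).trace).re

/-- On outcome `k`, guess uniformly among the permutations sending `k` to `j`. -/
noncomputable def guessingPOVM (j : α) (π : Perm α) : Matrix α α ℂ :=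
  ((Fintype.card α - 1)! : ℂ)⁻¹ • diagonal fun k => if π k = j then 1 else 0

theorem posSemidef_guessingPOVM (j : α) (π : Perm α) : (guessingPOVM j π).PosSemidef := by
  refine PosSemidef.smul (PosSemidef.diagonal fun k => ?_) (by positivity)
  split_ifs <;> simp

theorem sum_guessingPOVM [Nonempty α] (j : α) : ∑ π, guessingPOVM j π = 1 := by
  have hcount : ∑ π : Perm α, diagonal (fun k => if π k = j then (1 : ℂ) else 0)
      = ((Fintype.card α - 1)! : ℂ) • 1 := by
    ext k l
    rcases eq_or_ne k l with rfl | hkl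
    · simp [Matrix.sum_apply, sum_boole, Perm.card_filter_apply_eq]
    · simp [Matrix.sum_apply, hkl]
  simp only [guessingPOVM]
  rw [← smul_sum, hcount, smul_smul, inv_mul_cancel₀ (by positivity), one_smul]

theorem re_trace_diagonal_mul_guessingPOVM (c : α → ℂ) (j : α) (π : Perm α) :
    ((diagonal (fun k => c (π k)) * guessingPOVM j π).trace).re
      = ((Fintype.card α - 1)! : ℝ)⁻¹ * (c j).re := by
  have hsum : ∑ k, c (π k) * (if π k = j then 1 else 0) = c j := by
    simp only [mul_ite, mul_one, mul_zero]
    exact (Equiv.sum_comp π fun m => if m = j then c m else 0).trans (by simp)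
  rw [guessingPOVM, mul_smul_comm, diagonal_mul_diagonal, trace_smul, trace_diagonal, hsum,
    smul_eq_mul, ← Complex.ofReal_natCast, ← Complex.ofReal_inv, Complex.re_ofReal_mul]

theorem isGreatest_permutedSuccessProb [Nonempty α] (c : α → ℂ) :
    IsGreatest {s | ∃ T : Perm α → Matrix α α ℂ,
        (∀ π, (T π).PosSemidef) ∧ ∑ π, T π = 1 ∧ s = permutedSuccessProb c T}
      (((Fintype.card α - 1)! : ℝ)⁻¹ * ⨆ j, (c j).re) := by
  obtain ⟨j, hj⟩ := exists_eq_ciSup_of_finite (f := fun j => (c j).re)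
  have hfact : ((Fintype.card α)! : ℝ) = Fintype.card α * (Fintype.card α - 1)! := by
    exact_mod_cast (Nat.mul_factorial_pred Fintype.card_ne_zero).symm
  refine ⟨⟨guessingPOVM j, posSemidef_guessingPOVM j, sum_guessingPOVM j, ?_⟩, ?_⟩
  · simp only [permutedSuccessProb, re_trace_diagonal_mul_guessingPOVM, sum_const, card_univ,
      Fintype.card_perm, nsmul_eq_mul, hfact, ← hj]
    field_simp
  · rintro s ⟨T, hT, hTsum, rfl⟩
    have hterm (π : Perm α) : ((diagonal (fun k => c (π k)) * T π).trace).re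
        ≤ (⨆ j, (c j).re) * (T π).trace.re :=
      (hT π).re_trace_diagonal_mul_le fun k =>
        le_ciSup (Finite.bddAbove_range fun j => (c j).re) (π k)
    calc permutedSuccessProb c T
        ≤ ((Fintype.card α)! : ℝ)⁻¹ * ∑ π, (⨆ j, (c j).re) * (T π).trace.re := by
          unfold permutedSuccessProb
          gcongr with π
          exact hterm π
      _ = ((Fintype.card α - 1)! : ℝ)⁻¹ * ⨆ j, (c j).re := by
          rw [← mul_sum, ← Complex.re_sum, ← trace_sum, hTsum, trace_one, Complex.natCast_re,
            hfact]
          field_simp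

end PermutedDiscrimination

theorem permuted_observable_discrimination_general
    {d n : ℕ} [NeZero n]
    (M : Fin n → Matrix (Fin d) (Fin d) ℂ)
    (ρ : Matrix (Fin d) (Fin d) ℂ) :
    IsGreatest
      { s : ℝ | ∃ T : Equiv.Perm (Fin n) → Matrix (Fin n) (Fin n) ℂ,
          (∀ π, (T π).PosSemidef) ∧ (∑ π, T π = 1) ∧
          s = ((Nat.factorial n : ℝ))⁻¹ * ∑ π : Equiv.Perm (Fin n),
            (((Matrix.diagonal fun k => (ρ * M (π k)).trace) * T π).trace).re }
      (((Nat.factorial (n - 1) : ℝ))⁻¹ * ⨆ j, ((ρ * M j).trace).re) := by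
  have h := isGreatest_permutedSuccessProb fun j => (ρ * M j).trace
  simp only [permutedSuccessProb, Fintype.card_fin] at h
  exact h

/-- For a fixed probe state `ρ` and an `n`-effect observable `M`, the `n!` classical
states `ρ_π = ∑ k, Tr[ρ M_{π k}] |k⟩⟨k|` with uniform priors `1/n!` can be
discriminated with optimal success probability `(1/(n-1)!) ⬝ max_j Tr[ρ M_j]`. -/
theorem permuted_observable_discrimination
    {d n : ℕ} [NeZero n]
    (M : Fin n → Matrix (Fin d) (Fin d) ℂ)
    (hM : ∀ j, (M j).PosSemidef) (hMsum : ∑ j, M j = 1)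
    (ρ : Matrix (Fin d) (Fin d) ℂ) (hρ : IsDensity ρ) :
    IsGreatest
      { s : ℝ | ∃ T : Equiv.Perm (Fin n) → Matrix (Fin n) (Fin n) ℂ,
          (∀ π, (T π).PosSemidef) ∧ (∑ π, T π = 1) ∧
          s = ((Nat.factorial n : ℝ))⁻¹ * ∑ π : Equiv.Perm (Fin n),
            (((Matrix.diagonal fun k => (ρ * M (π k)).trace) * T π).trace).re }
      (((Nat.factorial (n - 1) : ℝ))⁻¹ * ⨆ j, ((ρ * M j).trace).re) :=
  permuted_observable_discrimination_general M ρ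
end

section
/- A non-binary observable M with n ≥ 3 pairwise distinct effects cannot be unambiguously labeled in a single shot: there is no quantum 1-tester {T_1,…,T_{n!}, T_?} with at least one T_π ≠ 0 satisfying the no-error conditions Tr[Φ_{π'} T_π] = 0 for all π ≠ π'. -/
open Matrix Finset Equiv
open scoped ComplexOrder

/-!
Each term `Tr[(M m)ᵀ H_{π' m}^{(π)}]` of a no-error sum is the trace of a product of two positive
semidefinite matrices, hence nonnegative, so all of them vanish. For `n ≥ 3`, every pair `(m, k)`
is realised as `π' m = k` by some `π' ≠ π`, so `Tr[(M m)ᵀ H_k^{(π)}] = 0` for every `m`. Summing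
over `m` and using `∑ M m = 1` gives `Tr H_k^{(π)} = 0`, and a positive semidefinite matrix with
zero trace is zero.
-/

namespace Matrix

variable {n 𝕜 : Type*} [Fintype n] [RCLike 𝕜]

open scoped MatrixOrder in
lemma PosSemidef.trace_mul_nonneg {A B : Matrix n n 𝕜} (hA : A.PosSemidef)
    (hB : B.PosSemidef) : 0 ≤ (A * B).trace := by
  classical
  obtain ⟨C, rfl⟩ := CStarAlgebra.nonneg_iff_eq_star_mul_self.mp hB.nonneg
  rw [star_eq_conjTranspose, ← mul_assoc, trace_mul_comm, ← mul_assoc]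
  exact (hA.mul_mul_conjTranspose_same C).trace_nonneg

lemma PosSemidef.eq_zero_of_forall_trace_mul_eq_zero [DecidableEq n] {ι : Type*} [Fintype ι]
    {M : ι → Matrix n n 𝕜} (hM : ∑ i, M i = 1) {A : Matrix n n 𝕜} (hA : A.PosSemidef)
    (h : ∀ i, (M i * A).trace = 0) : A = 0 := by
  rw [← hA.trace_eq_zero_iff, ← one_mul A, ← hM, Finset.sum_mul, trace_sum]
  exact Finset.sum_eq_zero fun i _ => h i

end Matrix

lemma Equiv.Perm.exists_ne_apply_eq {α : Type*} [Fintype α] [DecidableEq α]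
    (hα : 2 < Fintype.card α) (σ : Perm α) (a b : α) : ∃ τ : Perm α, τ ≠ σ ∧ τ a = b := by
  have hcard : 1 < (univ.erase b).card := by
    rw [card_erase_of_mem (mem_univ b), card_univ]
    omega
  obtain ⟨x, hx, y, hy, hxy⟩ := one_lt_card.mp hcard
  set τ := swap (σ a) b * σ
  have hτ : τ a = b := by simp [τ]
  by_cases hτσ : τ = σ
  · refine ⟨swap x y * τ, ?_, ?_⟩
    · rw [hτσ, Ne, mul_eq_right, swap_eq_one_iff]
      exact hxy
    · rw [Perm.mul_apply, hτ, swap_apply_of_ne_of_ne (ne_of_mem_erase hx).symm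
        (ne_of_mem_erase hy).symm]
  · exact ⟨τ, hτσ, hτ⟩

theorem no_single_shot_unambiguous_labeling_general
    {d n : ℕ} (hn : 3 ≤ n)
    (M : Fin n → Matrix (Fin d) (Fin d) ℂ)
    (hM : ∀ j, (M j).PosSemidef) (hMsum : ∑ j, M j = 1)
    (H : Fin n → Option (Equiv.Perm (Fin n)) → Matrix (Fin d) (Fin d) ℂ)
    (hH : ∀ k α, (H k α).PosSemidef)
    (hNoError : ∀ π π' : Equiv.Perm (Fin n), π ≠ π' →
      ∑ k, ((M k)ᵀ * H (π' k) (some π)).trace = 0) :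
    ∀ (π : Equiv.Perm (Fin n)) (k : Fin n), H k (some π) = 0 := by
  intro π k
  have hMTsum : ∑ j, (M j)ᵀ = 1 := by rw [← transpose_sum, hMsum, transpose_one]
  refine (hH k (some π)).eq_zero_of_forall_trace_mul_eq_zero hMTsum fun m => ?_
  obtain ⟨π', hπ', rfl⟩ := π.exists_ne_apply_eq (by rwa [Fintype.card_fin]) m k
  have hterms_nonneg : ∀ j ∈ univ, 0 ≤ ((M j)ᵀ * H (π' j) (some π)).trace :=
    fun j _ => (hM j).transpose.trace_mul_nonneg (hH _ _)
  exact (sum_eq_zero_iff_of_nonneg hterms_nonneg).mp (hNoError π π' hπ'.symm) m (mem_univ m)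

/-- A non-binary observable (`n ≥ 3` pairwise distinct nonzero effects) cannot be
unambiguously labeled in a single shot: for any 1-tester
`T_α = ∑ k H_k^{(α)} ⊗ |k⟩⟨k|` (with `α` ranging over the `n!` conclusive outcomes
`some π` and the inconclusive outcome `none`, and `∑_α H_k^{(α)} = ρ` a density
operator) satisfying the no-error conditions `Tr[Φ_{π'} T_π] = 0` for all `π' ≠ π`,
every conclusive tester element vanishes: `T_π = 0`, i.e. `H k (some π) = 0`. -/
theorem no_single_shot_unambiguous_labeling
    {d n : ℕ} (hn : 3 ≤ n)
    (M : Fin n → Matrix (Fin d) (Fin d) ℂ)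
    (hM : ∀ j, (M j).PosSemidef) (hMsum : ∑ j, M j = 1)
    (hMne : ∀ j, M j ≠ 0) (hMdist : ∀ j j', j ≠ j' → M j ≠ M j')
    (ρ : Matrix (Fin d) (Fin d) ℂ) (hρ : IsDensity ρ)
    (H : Fin n → Option (Equiv.Perm (Fin n)) → Matrix (Fin d) (Fin d) ℂ)
    (hH : ∀ k α, (H k α).PosSemidef)
    (hHsum : ∀ k, ∑ α : Option (Equiv.Perm (Fin n)), H k α = ρ)
    (hNoError : ∀ π π' : Equiv.Perm (Fin n), π ≠ π' →
      ∑ k, ((M k)ᵀ * H (π' k) (some π)).trace = 0) :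
    ∀ (π : Equiv.Perm (Fin n)) (k : Fin n), H k (some π) = 0 :=
  no_single_shot_unambiguous_labeling_general hn M hM hMsum H hH hNoError
end

section
/- Let M_1, M_2 ≥ 0 with M_1 + M_2 = 𝟙 both invertible on a d-dimensional Hilbert space. Then for any number of shots n ≥ 1, the tensor-power operators M_{x_1}^⊤ ⊗ ⋯ ⊗ M_{x_n}^⊤ and their swapped counterparts (obtained by exchanging M_1 ↔ M_2) cannot be perfectly discriminated by any n-slot tester: any positive operator Ξ satisfying the perfect-labeling conditions must be zero. In particular, a binary observable that cannot be perfectly labeled in one shot cannot be perfectly labeled in any finite number of shots. -/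
open Matrix
open scoped ComplexOrder

/-- Tensor product of a string of `d × d` matrices, as a matrix indexed by
`Fin n → Fin d`. -/
def tensorString {d n : ℕ} (A : Fin n → Matrix (Fin d) (Fin d) ℂ) :
    Matrix (Fin n → Fin d) (Fin n → Fin d) ℂ :=
  Matrix.of fun r c => ∏ i, A i (r i) (c i)

lemma tensorString_mul {d n : ℕ} (A B : Fin n → Matrix (Fin d) (Fin d) ℂ) :
    tensorString A * tensorString B = tensorString (fun i => A i * B i) := by
  ext r c
  simp only [tensorString, Matrix.mul_apply, Matrix.of_apply]
  rw [show (∏ i, (∑ j, A i (r i) j * B i j (c i))) =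
      ∑ x : Fin n → Fin d, ∏ i, A i (r i) (x i) * B i (x i) (c i) from
    Fintype.prod_sum (fun i j => A i (r i) j * B i j (c i))]
  exact Finset.sum_congr rfl fun x _ => (Finset.prod_mul_distrib).symm

lemma tensorString_one {d n : ℕ} :
    tensorString (fun _ : Fin n => (1 : Matrix (Fin d) (Fin d) ℂ)) = 1 := by
  ext r c
  simp only [tensorString, Matrix.of_apply, Matrix.one_apply]
  by_cases h : r = c
  · subst h; simp
  · rw [if_neg h]
    obtain ⟨i, hi⟩ := Function.ne_iff.mp h
    exact Finset.prod_eq_zero (Finset.mem_univ i) (by simp [hi])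

lemma tensorString_isUnit {d n : ℕ} (A : Fin n → Matrix (Fin d) (Fin d) ℂ)
    (hA : ∀ i, IsUnit (A i)) : IsUnit (tensorString A) := by
  choose B hB hB' using fun i => isUnit_iff_exists.mp (hA i)
  exact isUnit_iff_exists.mpr ⟨tensorString B, by
    rw [tensorString_mul]; simp only [hB]; exact tensorString_one, by
    rw [tensorString_mul]; simp only [hB']; exact tensorString_one⟩

/-- A binary observable with both effects full rank (not perfectly labelable in one
shot) is not perfectly labelable in any finite number `n ≥ 1` of shots: any positive
semidefinite operator `Ξ` satisfying the perfect-labeling conditions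
`(M_{x₁}ᵀ ⊗ ⋯ ⊗ M_{xₙ}ᵀ) Ξ (N_{x₁}ᵀ ⊗ ⋯ ⊗ N_{xₙ}ᵀ) = 0` for all outcome strings
`x` (where `N₁ = M₂`, `N₂ = M₁`) must be zero. -/
theorem no_multishot_perfect_labeling
    {d n : ℕ} (hn : 1 ≤ n)
    (M : Fin 2 → Matrix (Fin d) (Fin d) ℂ)
    (hM : ∀ j, (M j).PosSemidef) (hsum : M 0 + M 1 = 1)
    (hfull : ∀ j, IsUnit (M j))
    (Ξ : Matrix (Fin n → Fin d) (Fin n → Fin d) ℂ) (hΞ : Ξ.PosSemidef)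
    (hperfect : ∀ x : Fin n → Fin 2,
      tensorString (fun i => (M (x i))ᵀ) * Ξ *
        tensorString (fun i => (M (x i + 1))ᵀ) = 0) :
    Ξ = 0 := by
  have h := hperfect (fun _ => 0)
  have hT : ∀ j, IsUnit (M j)ᵀ := fun j => by
    rw [Matrix.isUnit_iff_isUnit_det, Matrix.det_transpose,
      ← Matrix.isUnit_iff_isUnit_det]
    exact hfull j
  have hA : IsUnit (tensorString (fun _ : Fin n => (M 0)ᵀ)) :=
    tensorString_isUnit _ fun _ => hT 0
  have hB : IsUnit (tensorString (fun i : Fin n => (M (0 + 1))ᵀ)) :=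
    tensorString_isUnit _ fun _ => hT 1
  obtain ⟨A, hAeq⟩ := hA
  obtain ⟨B, hBeq⟩ := hB
  rw [← hAeq, ← hBeq, mul_assoc] at h
  exact (Units.mul_left_eq_zero B).mp ((Units.mul_right_eq_zero A).mp h)
end

section
/- For a binary qubit observable with effects M_1 ≥ 0 and M_2 = 𝟙 − M_1 ≥ 0, the spectral norms satisfy ‖M_1 − M_2‖ = ‖M_1 ⊗ M_1 − M_2 ⊗ M_2‖, where ‖·‖ denotes the operator (spectral) norm. Hence two uses of a binary qubit observable do not decrease the minimum labeling error compared to one use. -/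
open Matrix Kronecker
open scoped ComplexOrder Matrix.Norms.L2Operator

/-!
With `M₂ = 1 - M₁` and `A = M₁ - M₂ = 2 M₁ - 1`, bilinearity of `⊗ₖ` gives
`2 (M₁ ⊗ M₁ - M₂ ⊗ M₂) = A ⊗ 1 + 1 ⊗ A`. Diagonalising `A = U D U*` with eigenvalues `aᵢ`,
the matrix `A ⊗ 1 + 1 ⊗ A` is unitarily conjugate to the diagonal matrix with entries
`aᵢ + aⱼ`, whose operator norm `maxᵢⱼ |aᵢ + aⱼ|` is attained at `i = j` and equals `2 ‖A‖`.
-/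

namespace Matrix

variable {n : Type*} [DecidableEq n]

theorem two_smul_kronecker_self_sub_kronecker_self {R : Type*} [CommRing R]
    {M₁ M₂ : Matrix n n R} (h : M₁ + M₂ = 1) :
    (2 : R) • (M₁ ⊗ₖ M₁ - M₂ ⊗ₖ M₂) = (M₁ - M₂) ⊗ₖ 1 + 1 ⊗ₖ (M₁ - M₂) := by
  obtain rfl : M₂ = 1 - M₁ := eq_sub_of_add_eq' h
  ext ⟨i, j⟩ ⟨k, l⟩
  simp only [kronecker_apply, Matrix.sub_apply, Matrix.add_apply, Matrix.smul_apply, one_apply,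
    smul_eq_mul]
  split_ifs <;> ring

theorem diagonal_kronecker_one_add_one_kronecker_diagonal {R : Type*} [CommRing R] (d : n → R) :
    diagonal d ⊗ₖ 1 + 1 ⊗ₖ diagonal d = diagonal fun p : n × n => d p.1 + d p.2 := by
  rw [← diagonal_one, diagonal_kronecker_diagonal, diagonal_kronecker_diagonal, diagonal_add]
  simp

variable [Fintype n]

theorem kronecker_one_add_one_kronecker_conj_unitary {R : Type*} [CommRing R] [StarRing R]
    {U : Matrix n n R} (hU : U ∈ unitary (Matrix n n R)) (B : Matrix n n R) :
    (U * B * star U) ⊗ₖ 1 + 1 ⊗ₖ (U * B * star U) =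
      (U ⊗ₖ U) * (B ⊗ₖ 1 + 1 ⊗ₖ B) * star (U ⊗ₖ U) := by
  have hstar : star (U ⊗ₖ U) = star U ⊗ₖ star U := conjTranspose_kronecker U U
  rw [hstar, mul_add, add_mul, ← mul_kronecker_mul, ← mul_kronecker_mul, ← mul_kronecker_mul,
    ← mul_kronecker_mul, mul_one, Unitary.mul_star_self_of_mem hU]

theorem l2_opNorm_unitary_conj {𝕜 : Type*} [RCLike 𝕜] {U : Matrix n n 𝕜}
    (hU : U ∈ unitary (Matrix n n 𝕜)) (B : Matrix n n 𝕜) : ‖U * B * star U‖ = ‖B‖ := by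
  rw [CStarRing.norm_mul_mem_unitary _ (Unitary.star_mem hU), CStarRing.norm_mem_unitary_mul _ hU]

end Matrix

theorem Pi.norm_fst_add_snd {ι E : Type*} [Fintype ι] [SeminormedAddCommGroup E]
    [NormedSpace ℝ E] (d : ι → E) : ‖fun p : ι × ι => d p.1 + d p.2‖ = 2 * ‖d‖ := by
  refine le_antisymm ?_ ?_
  · refine (pi_norm_le_iff_of_nonneg (by positivity)).mpr fun p => ?_
    calc ‖d p.1 + d p.2‖ ≤ ‖d p.1‖ + ‖d p.2‖ := norm_add_le _ _
      _ ≤ ‖d‖ + ‖d‖ := add_le_add (norm_le_pi_norm d _) (norm_le_pi_norm d _)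
      _ = 2 * ‖d‖ := (two_mul _).symm
  · calc 2 * ‖d‖ = ‖(2 : ℝ) • d‖ := by rw [norm_smul, Real.norm_two]
      _ ≤ _ := (pi_norm_le_iff_of_nonneg (norm_nonneg _)).mpr fun i => by
        simpa [two_smul] using norm_le_pi_norm (fun p : ι × ι => d p.1 + d p.2) (i, i)

theorem Matrix.IsHermitian.l2_opNorm_kronecker_one_add_one_kronecker {n 𝕜 : Type*} [Fintype n]
    [DecidableEq n] [RCLike 𝕜] {A : Matrix n n 𝕜} (hA : A.IsHermitian) :
    ‖A ⊗ₖ 1 + 1 ⊗ₖ A‖ = 2 * ‖A‖ := by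
  have hU := hA.eigenvectorUnitary.2
  rw [hA.spectral_theorem, Unitary.conjStarAlgAut_apply,
    kronecker_one_add_one_kronecker_conj_unitary hU,
    l2_opNorm_unitary_conj (kronecker_mem_unitary hU hU), l2_opNorm_unitary_conj hU,
    diagonal_kronecker_one_add_one_kronecker_diagonal, l2_opNorm_diagonal, l2_opNorm_diagonal,
    Pi.norm_fst_add_snd]

/-- For a binary qubit observable `{M₁, M₂ = 𝟙 − M₁}`, the spectral (operator) norms
satisfy `‖M₁ − M₂‖ = ‖M₁ ⊗ M₁ − M₂ ⊗ M₂‖`; hence two uses of a binary qubit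
observable do not decrease the minimum labeling error compared to one use. -/
theorem qubit_two_shot_norm_eq
    (M₁ M₂ : Matrix (Fin 2) (Fin 2) ℂ)
    (hM₁ : M₁.PosSemidef) (hM₂ : M₂.PosSemidef)
    (hsum : M₁ + M₂ = 1) :
    ‖M₁ - M₂‖ = ‖M₁ ⊗ₖ M₁ - M₂ ⊗ₖ M₂‖ := by
  have h := congrArg norm (two_smul_kronecker_self_sub_kronecker_self hsum)
  rw [(hM₁.1.sub hM₂.1).l2_opNorm_kronecker_one_add_one_kronecker, norm_smul,
    Complex.norm_two] at h
  exact (mul_left_cancel₀ two_ne_zero h).symm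
end

section
/- Let M_1 ≥ 0 on C^2 with eigenvalues λ_1, λ_2 ∈ [0,1] and M_2 = 𝟙 − M_1. Then ‖M_1^{⊗n} − M_2^{⊗n}‖ = max{|λ_1^n − (1−λ_1)^n|, |λ_2^n − (1−λ_2)^n|, max_{0<k<n} |λ_1^k λ_2^{n−k} − (1−λ_1)^k (1−λ_2)^{n−k}|}, and in particular ‖M_1^{⊗n} − M_2^{⊗n}‖ ≤ ‖M_1 − M_2‖ for all n ≥ 1. -/
open Matrix Finset
open scoped ComplexOrder Matrix.Norms.L2Operator

/-- The `n`-fold tensor power of a `2 × 2` matrix, indexed by `Fin n → Fin 2`. -/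
def kronPow (n : ℕ) (A : Matrix (Fin 2) (Fin 2) ℂ) :
    Matrix (Fin n → Fin 2) (Fin n → Fin 2) ℂ :=
  Matrix.of fun r c => ∏ i, A (r i) (c i)

/-!
Let `U` be the unitary whose columns are the `e i`. Then `M₁ = U diag(λ) Uᴴ`,
`M₂ = U diag(1 - λ) Uᴴ`, and since `kronPow n` is multiplicative and commutes with `ᴴ`,
`M₁^{⊗n} - M₂^{⊗n}` is the unitary `U^{⊗n}` conjugating the diagonal matrix with entries
`∏ λ_{r i} - ∏ (1 - λ_{r i})`. Its norm is the largest absolute value of these entries, which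
depend on `r` only through `k = #{i | r i = 0}`. For the comparison with
`‖M₁ - M₂‖ = max |λᵢ - (1 - λᵢ)|`: writing `2(ab - cd) = (a - c)(b + d) + (a + c)(b - d)` gives
`|ab - cd| ≤ max |a - c| |b - d|` for nonnegative `a, b, c, d` with `a + c ≤ 1`, `b + d ≤ 1`.
The pairs `(∏ λ_{r i}, ∏ (1 - λ_{r i}))` again have sum at most `1`, so this bound propagates
along the product.
-/

theorem abs_mul_sub_mul_le_max_abs_sub {a b c d : ℝ} (ha : 0 ≤ a) (hb : 0 ≤ b) (hc : 0 ≤ c)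
    (hd : 0 ≤ d) (hac : a + c ≤ 1) (hbd : b + d ≤ 1) :
    |a * b - c * d| ≤ max |a - c| |b - d| := by
  set D := max |a - c| |b - d|
  obtain ⟨h₁, h₁'⟩ := abs_le.mp (le_max_left |a - c| |b - d|)
  obtain ⟨h₂, h₂'⟩ := abs_le.mp (le_max_right |a - c| |b - d|)
  have hD : 0 ≤ D := (abs_nonneg _).trans (le_max_left _ _)
  rw [abs_le]
  constructor <;> nlinarith [mul_nonneg (sub_nonneg.2 h₁') (add_nonneg hb hd),
    mul_nonneg (neg_le_iff_add_nonneg.1 h₁) (add_nonneg hb hd),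
    mul_nonneg (sub_nonneg.2 h₂') (add_nonneg ha hc),
    mul_nonneg (neg_le_iff_add_nonneg.1 h₂) (add_nonneg ha hc)]

theorem Finset.abs_prod_sub_prod_le {ι : Type*} (s : Finset ι) {p q : ι → ℝ} {D : ℝ}
    (hp : ∀ i ∈ s, 0 ≤ p i) (hq : ∀ i ∈ s, 0 ≤ q i) (hpq : ∀ i ∈ s, p i + q i ≤ 1)
    (hD : 0 ≤ D) (h : ∀ i ∈ s, |p i - q i| ≤ D) :
    |∏ i ∈ s, p i - ∏ i ∈ s, q i| ≤ D := by
  obtain rfl | hs := s.eq_empty_or_nonempty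
  · simpa using hD
  induction hs using Finset.Nonempty.cons_induction with
  | singleton a => simpa using h a (mem_singleton_self a)
  | cons a s _ hs ih =>
    simp only [mem_cons, forall_eq_or_imp] at hp hq hpq h
    obtain ⟨i, hi⟩ := hs
    have hsum : ∏ j ∈ s, p j + ∏ j ∈ s, q j ≤ 1 := by
      simpa using prod_add_prod_le (f := fun _ => 1) hi (hpq.2 i hi)
        (fun j hj _ => by linarith [hq.2 j hj, hpq.2 j hj])
        (fun j hj _ => by linarith [hp.2 j hj, hpq.2 j hj]) hp.2 hq.2
    rw [prod_cons, prod_cons]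
    exact (abs_mul_sub_mul_le_max_abs_sub hp.1 (prod_nonneg hp.2) hq.1 (prod_nonneg hq.2)
      hpq.1 hsum).trans (max_le h.1 (ih hp.2 hq.2 hpq.2 h.2))

theorem norm_prod_comp_sub_prod_comp_le {ι κ : Type*} [Fintype ι] [DecidableEq ι] [Fintype κ]
    {p q : κ → ℝ} (hp : 0 ≤ p) (hq : 0 ≤ q) (hpq : p + q ≤ 1) :
    ‖fun r : ι → κ => ∏ i, p (r i) - ∏ i, q (r i)‖ ≤ ‖p - q‖ :=
  (pi_norm_le_iff_of_nonneg (norm_nonneg _)).mpr fun r =>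
    (Real.norm_eq_abs _).trans_le <| univ.abs_prod_sub_prod_le (fun i _ => hp (r i))
      (fun i _ => hq (r i)) (fun i _ => hpq (r i)) (norm_nonneg _)
      fun i _ => (Real.norm_eq_abs _).symm.trans_le (norm_le_pi_norm (p - q) (r i))

theorem Fin.prod_comp_fin_two {M : Type*} [CommMonoid M] {n : ℕ} (c : Fin 2 → M)
    (r : Fin n → Fin 2) :
    ∏ i, c (r i) = c 0 ^ #{i | r i = 0} * c 1 ^ (n - #{i | r i = 0}) := by
  rw [← prod_filter_mul_prod_filter_not univ (fun i => r i = 0)]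
  congr 1
  · rw [prod_congr rfl fun i hi => by rw [(mem_filter.mp hi).2], Finset.prod_const]
  · have hr (i) (hi : i ∈ univ.filter fun i => ¬r i = 0) : c (r i) = c 1 := by
      rw [Fin.eq_one_of_ne_zero _ (mem_filter.mp hi).2]
    rw [prod_congr rfl hr, Finset.prod_const, filter_not,
      card_sdiff_of_subset (filter_subset _ _), card_univ, Fintype.card_fin]

theorem Fin.exists_fin_two_card_filter_eq_zero {n k : ℕ} (hk : k ≤ n) :
    ∃ r : Fin n → Fin 2, #{i | r i = 0} = k :=
  ⟨fun i => if (i : ℕ) < k then 0 else 1, by simp [Fin.card_filter_val_lt, hk]⟩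

theorem norm_prod_comp_fin_two_sub (c d : Fin 2 → ℝ) (n : ℕ) :
    ‖fun r : Fin n → Fin 2 => ∏ i, c (r i) - ∏ i, d (r i)‖ =
      (range (n + 1)).sup' ⟨0, by simp⟩ fun k =>
        |c 0 ^ k * c 1 ^ (n - k) - d 0 ^ k * d 1 ^ (n - k)| := by
  set g : ℕ → ℝ := fun k => |c 0 ^ k * c 1 ^ (n - k) - d 0 ^ k * d 1 ^ (n - k)|
  have hg (r : Fin n → Fin 2) : ‖∏ i, c (r i) - ∏ i, d (r i)‖ = g #{i | r i = 0} := by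
    rw [Real.norm_eq_abs, Fin.prod_comp_fin_two, Fin.prod_comp_fin_two]
  refine le_antisymm ((pi_norm_le_iff_of_nonneg ?_).mpr fun r => ?_) (sup'_le _ _ fun k hk => ?_)
  · exact (abs_nonneg _).trans (le_sup' g (self_mem_range_succ n))
  · exact (hg r).trans_le <|
      le_sup' g (mem_range_succ_iff.mpr ((card_filter_le _ _).trans_eq (card_fin n)))
  · obtain ⟨r, rfl⟩ := Fin.exists_fin_two_card_filter_eq_zero (mem_range_succ_iff.mp hk)
    rw [← hg r]
    exact norm_le_pi_norm (fun r : Fin n → Fin 2 => ∏ i, c (r i) - ∏ i, d (r i)) r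

theorem Matrix.transpose_of_mem_unitary_of_orthonormal {R ι : Type*} [CommRing R] [StarRing R]
    [Fintype ι] [DecidableEq ι] {e : ι → ι → R} (h : ∀ i j, star (e i) ⬝ᵥ e j = if i = j then 1 else 0) :
    (of e)ᵀ ∈ unitary (Matrix ι ι R) := by
  rw [← unitaryGroup, mem_unitaryGroup_iff']
  ext i j
  simpa [mul_apply, dotProduct, one_apply] using h i j

theorem Matrix.sum_smul_vecMulVec_star {R ι n : Type*} [CommSemiring R] [StarRing R]
    [Fintype ι] [DecidableEq ι] (e : ι → n → R) (d : ι → R) :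
    ∑ i, d i • vecMulVec (e i) (star (e i)) = (of e)ᵀ * diagonal d * (of e)ᵀᴴ := by
  ext a b
  simp only [sum_apply, smul_apply, vecMulVec_apply, Pi.star_apply, smul_eq_mul, mul_apply,
    transpose_apply, of_apply, diagonal_apply, mul_ite, mul_zero, sum_ite_eq', mem_univ,
    if_true, conjTranspose_apply, mul_assoc]
  exact sum_congr rfl fun _ _ => by ring

theorem Matrix.l2_opNorm_unitary_conj_s11 {𝕜 ι : Type*} [RCLike 𝕜] [Fintype ι] [DecidableEq ι]
    {U : Matrix ι ι 𝕜} (hU : U ∈ unitary (Matrix ι ι 𝕜)) (A : Matrix ι ι 𝕜) :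
    ‖U * A * Uᴴ‖ = ‖A‖ := by
  rw [← star_eq_conjTranspose, CStarRing.norm_mul_mem_unitary _ (Unitary.star_mem hU),
    CStarRing.norm_mem_unitary_mul _ hU]

theorem Matrix.l2_opNorm_unitary_conj_diagonal_sub {ι : Type*} [Fintype ι] [DecidableEq ι]
    {U : Matrix ι ι ℂ} (hU : U ∈ unitary (Matrix ι ι ℂ)) (a b : ι → ℝ) :
    ‖U * diagonal (fun i => (a i : ℂ)) * Uᴴ - U * diagonal (fun i => (b i : ℂ)) * Uᴴ‖ =
      ‖a - b‖ := by
  rw [← sub_mul, ← mul_sub, l2_opNorm_unitary_conj_s11 hU, diagonal_sub, l2_opNorm_diagonal]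
  simp only [Pi.norm_def, ← Complex.ofReal_sub, Complex.nnnorm_real, Pi.sub_apply]

theorem kronPow_mul (n : ℕ) (A B : Matrix (Fin 2) (Fin 2) ℂ) :
    kronPow n (A * B) = kronPow n A * kronPow n B := by
  ext r c
  simp only [kronPow, mul_apply, of_apply, prod_univ_sum, Fintype.piFinset_univ,
    prod_mul_distrib]

theorem kronPow_conjTranspose (n : ℕ) (A : Matrix (Fin 2) (Fin 2) ℂ) :
    kronPow n Aᴴ = (kronPow n A)ᴴ := by
  ext r c
  simp [kronPow, star_prod]

theorem kronPow_diagonal (n : ℕ) (d : Fin 2 → ℂ) :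
    kronPow n (diagonal d) = diagonal fun r => ∏ i, d (r i) := by
  ext r c
  obtain rfl | h := eq_or_ne r c
  · simp [kronPow]
  · obtain ⟨i, hi⟩ := Function.ne_iff.mp h
    rw [diagonal_apply_ne _ h]
    exact prod_eq_zero (mem_univ i) (diagonal_apply_ne _ hi)

theorem kronPow_one (n : ℕ) : kronPow n 1 = 1 := by
  rw [← diagonal_one, kronPow_diagonal]
  simp

theorem kronPow_mem_unitary (n : ℕ) {U : Matrix (Fin 2) (Fin 2) ℂ}
    (hU : U ∈ unitary (Matrix (Fin 2) (Fin 2) ℂ)) :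
    kronPow n U ∈ unitary (Matrix (Fin n → Fin 2) (Fin n → Fin 2) ℂ) := by
  rw [Unitary.mem_iff, star_eq_conjTranspose, ← kronPow_conjTranspose, ← kronPow_mul,
    ← kronPow_mul, ← star_eq_conjTranspose, Unitary.star_mul_self_of_mem hU,
    Unitary.mul_star_self_of_mem hU, kronPow_one]
  exact ⟨rfl, rfl⟩

theorem kronPow_unitary_conj_diagonal (n : ℕ) (U : Matrix (Fin 2) (Fin 2) ℂ)
    (d : Fin 2 → ℂ) :
    kronPow n (U * diagonal d * Uᴴ) =
      kronPow n U * diagonal (fun r => ∏ i, d (r i)) * (kronPow n U)ᴴ := by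
  rw [kronPow_mul, kronPow_mul, kronPow_diagonal, kronPow_conjTranspose]

/-- For a binary qubit observable with `M₁` having eigenvalues `λ₁, λ₂ ∈ [0,1]` and
`M₂ = 𝟙 − M₁`, the operator norm of `M₁^{⊗n} − M₂^{⊗n}` equals the maximum over
`0 ≤ k ≤ n` of `|λ₁^k λ₂^{n−k} − (1−λ₁)^k (1−λ₂)^{n−k}|` (the cases `k = n`, `k = 0`
being the endpoint terms `|λᵢⁿ − (1−λᵢ)ⁿ|`), and in particular
`‖M₁^{⊗n} − M₂^{⊗n}‖ ≤ ‖M₁ − M₂‖` for all `n ≥ 1`. -/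
theorem multishot_norm_formula
    {n : ℕ}
    (e : Fin 2 → (Fin 2 → ℂ)) (lam : Fin 2 → ℝ)
    (horth : ∀ i j, star (e i) ⬝ᵥ e j = if i = j then 1 else 0)
    (hlam : ∀ i, 0 ≤ lam i ∧ lam i ≤ 1)
    (M₁ M₂ : Matrix (Fin 2) (Fin 2) ℂ)
    (hM₁ : M₁ = ∑ i, (lam i : ℂ) • vecMulVec (e i) (star (e i)))
    (hM₂ : M₂ = 1 - M₁) :
    ‖kronPow n M₁ - kronPow n M₂‖ =
      (Finset.range (n + 1)).sup' ⟨0, by simp⟩ (fun k =>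
        |lam 0 ^ k * lam 1 ^ (n - k) - (1 - lam 0) ^ k * (1 - lam 1) ^ (n - k)|) ∧
    ‖kronPow n M₁ - kronPow n M₂‖ ≤ ‖M₁ - M₂‖ := by
  set U := (of e)ᵀ
  have hU : U ∈ unitary (Matrix (Fin 2) (Fin 2) ℂ) :=
    transpose_of_mem_unitary_of_orthonormal horth
  have hM₁' : M₁ = U * diagonal (fun i => (lam i : ℂ)) * Uᴴ := 
    hM₁.trans (sum_smul_vecMulVec_star e _)
  have hM₂' : M₂ = U * diagonal (fun i => ((1 - lam) i : ℂ)) * Uᴴ := by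
    have hone : (1 : Matrix (Fin 2) (Fin 2) ℂ) = U * diagonal (fun _ => 1) * Uᴴ := by
      rw [diagonal_one, mul_one, ← star_eq_conjTranspose, Unitary.mul_star_self_of_mem hU]
    rw [hM₂, hM₁', hone, ← sub_mul, ← mul_sub, diagonal_sub]
    simp
  have hkron : ‖kronPow n M₁ - kronPow n M₂‖ =
      ‖fun r : Fin n → Fin 2 => ∏ i, lam (r i) - ∏ i, (1 - lam) (r i)‖ := by
    rw [hM₁', hM₂', kronPow_unitary_conj_diagonal, kronPow_unitary_conj_diagonal]
    simp_rw [← Complex.ofReal_prod]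
    exact l2_opNorm_unitary_conj_diagonal_sub (kronPow_mem_unitary n hU) _ _
  refine ⟨hkron.trans (norm_prod_comp_fin_two_sub lam (1 - lam) n), ?_⟩
  rw [hkron, hM₁', hM₂', l2_opNorm_unitary_conj_diagonal_sub hU]
  exact norm_prod_comp_sub_prod_comp_le (fun i => (hlam i).1) (fun i => sub_nonneg.2 (hlam i).2)
    fun i => by simp
end

section
/- A d-dimensional observable M with n ∈ [2,d] effects can be perfectly labeled (by the simple scheme using n−1 probe states) if and only if at least n−1 of its effects have 1 as an eigenvalue. -/
/-!
If every other effect annihilates `φ`, then `φ = (∑ⱼ Mⱼ) φ = Mᵢ φ`. Conversely, if `Mᵢ φ = φ`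
then `∑_{j ≠ i} ⟪φ, Mⱼ φ⟫ = ⟪φ, (1 - Mᵢ) φ⟫ = 0`; the terms are nonnegative, so each vanishes, and
for a positive semidefinite `Mⱼ` this forces `Mⱼ φ = 0`. Rescaling `φ` to a unit vector gives
the probe.
-/

open Matrix Finset
open scoped ComplexOrder

theorem exists_smul_dotProduct_star_self_eq_one {m 𝕜 : Type*} [Fintype m] [RCLike 𝕜]
    {φ : m → 𝕜} (hφ : φ ≠ 0) : ∃ c : 𝕜, c ≠ 0 ∧ star (c • φ) ⬝ᵥ c • φ = 1 := by
  obtain ⟨r, hr, hrφ⟩ := RCLike.pos_iff_exists_ofReal.mp (dotProduct_star_self_pos_iff.mpr hφ)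
  have hsqrt : √r ≠ 0 := Real.sqrt_ne_zero'.mpr hr
  refine ⟨((√r)⁻¹ : ℝ), by simpa using hsqrt, ?_⟩
  rw [star_smul, smul_dotProduct, dotProduct_smul, ← hrφ, RCLike.star_def, RCLike.conj_ofReal,
    smul_eq_mul, smul_eq_mul, ← RCLike.ofReal_mul, ← RCLike.ofReal_mul, ← RCLike.ofReal_one,
    RCLike.ofReal_inj, ← mul_assoc, ← mul_inv, Real.mul_self_sqrt hr.le, inv_mul_cancel₀ hr.ne']

section Observable

variable {ι m 𝕜 : Type*} [Fintype ι] [Fintype m] [DecidableEq m]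

theorem mulVec_eq_self_of_sum_eq_one_of_mulVec_eq_zero [Semiring 𝕜]
    {M : ι → Matrix m m 𝕜} (hsum : ∑ j, M j = 1) {i : ι} {φ : m → 𝕜}
    (hφ : ∀ j, j ≠ i → M j *ᵥ φ = 0) : M i *ᵥ φ = φ :=
  calc M i *ᵥ φ = ∑ j, M j *ᵥ φ :=
        (Finset.sum_eq_single i (fun j _ hj => hφ j hj) (by simp)).symm
    _ = φ := by rw [← sum_mulVec, hsum, one_mulVec]

variable [RCLike 𝕜] {M : ι → Matrix m m 𝕜}

theorem mulVec_eq_zero_of_sum_eq_one_of_mulVec_eq_self (hM : ∀ j, (M j).PosSemidef)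
    (hsum : ∑ j, M j = 1) {i : ι} {φ : m → 𝕜} (hφ : M i *ᵥ φ = φ) {j : ι} (hj : j ≠ i) :
    M j *ᵥ φ = 0 := by
  classical
  have hrest : ∑ k ∈ univ.erase i, M k = 1 - M i := by
    rw [← hsum, ← Finset.add_sum_erase _ _ (mem_univ i), add_sub_cancel_left]
  have hzero : ∑ k ∈ univ.erase i, star φ ⬝ᵥ M k *ᵥ φ = 0 := by
    rw [← dotProduct_sum, ← sum_mulVec, hrest, sub_mulVec, one_mulVec, hφ, sub_self,
      dotProduct_zero]
  have hj0 : star φ ⬝ᵥ M j *ᵥ φ = 0 :=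
    (Finset.sum_eq_zero_iff_of_nonneg fun k _ => (hM k).dotProduct_mulVec_nonneg φ).mp hzero j
      (mem_erase.mpr ⟨hj, mem_univ j⟩)
  exact ((hM j).dotProduct_mulVec_zero_iff φ).mp hj0

theorem exists_unit_probe_iff_exists_mulVec_eq_self (hM : ∀ j, (M j).PosSemidef)
    (hsum : ∑ j, M j = 1) (i : ι) :
    (∃ φ : m → 𝕜, star φ ⬝ᵥ φ = 1 ∧ M i *ᵥ φ ≠ 0 ∧ ∀ j, j ≠ i → M j *ᵥ φ = 0) ↔
      ∃ φ : m → 𝕜, φ ≠ 0 ∧ M i *ᵥ φ = φ := by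
  constructor
  · rintro ⟨φ, hunit, -, hzero⟩
    refine ⟨φ, ?_, mulVec_eq_self_of_sum_eq_one_of_mulVec_eq_zero hsum hzero⟩
    rintro rfl
    simp at hunit
  · rintro ⟨φ, hφ, hfix⟩
    obtain ⟨c, hc, hunit⟩ := exists_smul_dotProduct_star_self_eq_one hφ
    refine ⟨c • φ, hunit, ?_, fun j hj => ?_⟩
    · rw [mulVec_smul, hfix]
      exact smul_ne_zero hc hφ
    · rw [mulVec_smul, mulVec_eq_zero_of_sum_eq_one_of_mulVec_eq_self hM hsum hfix hj, smul_zero]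

end Observable

theorem perfect_labeling_iff_eigenvalue_one_general
    {d n : ℕ}
    (M : Fin n → Matrix (Fin d) (Fin d) ℂ)
    (hM : ∀ j, (M j).PosSemidef) (hsum : ∑ j, M j = 1) :
    (∃ S : Finset (Fin n), n - 1 ≤ S.card ∧ ∀ i ∈ S,
        ∃ φ : Fin d → ℂ, star φ ⬝ᵥ φ = 1 ∧
          (M i).mulVec φ ≠ 0 ∧ ∀ j, j ≠ i → (M j).mulVec φ = 0) ↔
    (∃ S : Finset (Fin n), n - 1 ≤ S.card ∧ ∀ i ∈ S,
        ∃ φ : Fin d → ℂ, φ ≠ 0 ∧ (M i).mulVec φ = φ) :=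
  exists_congr fun _ => and_congr_right fun _ => forall₂_congr fun i _ =>
    exists_unit_probe_iff_exists_mulVec_eq_self hM hsum i

/-- Theorem 5: a `d`-dimensional observable with `n ∈ [2,d]` effects can be perfectly
labeled by the simple scheme in `n − 1` shots (i.e. for at least `n − 1` indices `i`
there is a unit probe vector `φ` annihilated by all other effects but not by `M_i`)
if and only if at least `n − 1` of its effects have `1` as an eigenvalue. -/
theorem perfect_labeling_iff_eigenvalue_one
    {d n : ℕ} (hn2 : 2 ≤ n) (hnd : n ≤ d)
    (M : Fin n → Matrix (Fin d) (Fin d) ℂ)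
    (hM : ∀ j, (M j).PosSemidef) (hsum : ∑ j, M j = 1) :
    (∃ S : Finset (Fin n), n - 1 ≤ S.card ∧ ∀ i ∈ S,
        ∃ φ : Fin d → ℂ, star φ ⬝ᵥ φ = 1 ∧
          (M i).mulVec φ ≠ 0 ∧ ∀ j, j ≠ i → (M j).mulVec φ = 0) ↔
    (∃ S : Finset (Fin n), n - 1 ≤ S.card ∧ ∀ i ∈ S,
        ∃ φ : Fin d → ℂ, φ ≠ 0 ∧ (M i).mulVec φ = φ) :=
  perfect_labeling_iff_eigenvalue_one_general M hM hsum
end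

section
/- Every perfectly labelable n-effect observable on a d-dimensional space (d ≥ n) has the form M_i = |e_i⟩⟨e_i| + A_i for i = 1,…,n−1 and M_n = A_n, where {e_1,…,e_{n−1}} is an orthonormal set spanning an (n−1)-dimensional subspace H_{n−1}, each A_i ≥ 0 is supported on the orthogonal complement of H_{n−1}, and Σ_{i=1}^n A_i equals the identity on that orthogonal complement. Conversely, every observable of this form is perfectly labelable. -/
open Matrix Finset
open scoped ComplexOrder

/-! Because the effects are positive and sum to `1`, an eigenvector of `M j` for the
eigenvalue `1` is killed by every other effect. Hence normalized such eigenvectors `e i`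
(`i ≠ i₀`) are orthonormal, each `M i - |e i⟩⟨e i|` is still positive, and these remainders
vanish on `span {e i}`. Conversely, a remainder supported on the orthogonal complement of
`span {e i}` kills `e i`, so `M i e i = e i`. -/

theorem Finset.exists_univ_erase_subset_of_card_sub_one_le {α : Type*} [Fintype α]
    [DecidableEq α] [Nonempty α] {S : Finset α} (hS : Fintype.card α - 1 ≤ S.card) :
    ∃ a, univ.erase a ⊆ S := by
  by_cases hS_univ : S = univ
  · obtain ⟨a⟩ := ‹Nonempty α›
    exact ⟨a, hS_univ ▸ erase_subset a univ⟩
  · obtain ⟨a, ha⟩ := not_forall.1 (mt eq_univ_iff_forall.2 hS_univ)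
    have hsub : S ⊆ univ.erase a := subset_erase.2 ⟨subset_univ S, ha⟩
    refine ⟨a, (eq_of_subset_of_card_le hsub ?_).ge⟩
    rwa [card_erase_of_mem (mem_univ a), card_univ]

variable {ι m 𝕜 : Type*} [Fintype m] [RCLike 𝕜]

theorem Matrix.exists_smul_star_dotProduct_eq_one {φ : m → 𝕜} (hφ : φ ≠ 0) :
    ∃ c : 𝕜, star (c • φ) ⬝ᵥ (c • φ) = 1 := by
  obtain ⟨r, hr, hrφ⟩ := RCLike.pos_iff_exists_ofReal.1 (dotProduct_star_self_pos_iff.2 hφ)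
  refine ⟨((√r : ℝ) : 𝕜)⁻¹, ?_⟩
  rw [star_smul, smul_dotProduct, dotProduct_smul, ← hrφ, smul_eq_mul, smul_eq_mul,
    ← RCLike.ofReal_inv, RCLike.star_def, RCLike.conj_ofReal, ← RCLike.ofReal_mul,
    ← RCLike.ofReal_mul, ← mul_assoc, ← mul_inv, Real.mul_self_sqrt hr.le,
    inv_mul_cancel₀ hr.ne', RCLike.ofReal_one]

theorem Matrix.IsHermitian.star_dotProduct_eq_zero {H : Matrix m m 𝕜} (hH : H.IsHermitian)
    {u v : m → 𝕜} (hu : H *ᵥ u = u) (hv : H *ᵥ v = 0) : star u ⬝ᵥ v = 0 :=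
  calc star u ⬝ᵥ v = star (H *ᵥ u) ⬝ᵥ v := by rw [hu]
    _ = star u ⬝ᵥ H *ᵥ v := by rw [star_mulVec, hH.eq, dotProduct_mulVec]
    _ = 0 := by rw [hv, dotProduct_zero]

theorem Matrix.sum_vecMulVec_mulVec_of_orthonormal [DecidableEq ι] {s : Finset ι}
    {e : ι → m → 𝕜} (he : ∀ i ∈ s, ∀ j ∈ s, star (e i) ⬝ᵥ e j = if i = j then 1 else 0)
    {i : ι} (hi : i ∈ s) :
    (∑ k ∈ s, vecMulVec (e k) (star (e k))) *ᵥ e i = e i := by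
  rw [sum_mulVec, sum_eq_single_of_mem i hi]
  · rw [vecMulVec_mulVec, he i hi i hi, if_pos rfl, MulOpposite.op_one, one_smul]
  · intro k hk hki
    rw [vecMulVec_mulVec, he k hk i hi, if_neg hki, MulOpposite.op_zero, zero_smul]

variable [DecidableEq m]

theorem Matrix.PosSemidef.sub_vecMulVec_of_mulVec_eq_self {M : Matrix m m 𝕜}
    (hM : M.PosSemidef) {e : m → 𝕜} (he : M *ᵥ e = e) (hunit : star e ⬝ᵥ e = 1) :
    (M - vecMulVec e (star e)).PosSemidef := by
  set P := vecMulVec e (star e)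
  have hPM : P * M = P := by
    rw [vecMulVec_mul, ← hM.isHermitian.eq, ← star_mulVec, he]
  have hMP : M * P = P := by rw [mul_vecMulVec, he]
  have hPP : P * P = P := by rw [vecMulVec_mul_vecMulVec, hunit, one_smul]
  have hP : Pᴴ = P := by rw [conjTranspose_vecMulVec, star_star]
  -- `P` is the orthogonal projection onto `e`, and `M` commutes with it
  have hcompress : M - P = (1 - P) * M * (1 - P)ᴴ := by
    rw [conjTranspose_sub, conjTranspose_one, hP, sub_mul, one_mul, hPM, sub_mul, mul_sub,
      mul_sub, mul_one, mul_one, hMP, hPP]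
    abel
  rw [hcompress]
  exact hM.mul_mul_conjTranspose_same _

theorem Matrix.IsHermitian.eq_one_sub_sum_vecMulVec_mul_mul {A : Matrix m m 𝕜}
    (hA : A.IsHermitian) {s : Finset ι} {e : ι → m → 𝕜} (h : ∀ k ∈ s, A *ᵥ e k = 0) :
    A = (1 - ∑ k ∈ s, vecMulVec (e k) (star (e k))) * A *
      (1 - ∑ k ∈ s, vecMulVec (e k) (star (e k))) := by
  set Q := ∑ k ∈ s, vecMulVec (e k) (star (e k))
  have hAQ : A * Q = 0 := by
    rw [mul_sum]
    exact sum_eq_zero fun k hk => by rw [mul_vecMulVec, h k hk, zero_vecMulVec]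
  have hQ : Qᴴ = Q := by
    simp only [Q, conjTranspose_sum, conjTranspose_vecMulVec, star_star]
  have hQA : Q * A = 0 := by rw [← hQ, ← hA.eq, ← conjTranspose_mul, hAQ, conjTranspose_zero]
  rw [sub_mul, one_mul, hQA, sub_zero, mul_sub, mul_one, hAQ, sub_zero]

structure IsLabeledDecomposition [Fintype ι] [DecidableEq ι] (M : ι → Matrix m m 𝕜) (i₀ : ι)
    (e : ι → m → 𝕜) (A : ι → Matrix m m 𝕜) : Prop where
  orthonormal : ∀ i ∈ univ.erase i₀, ∀ j ∈ univ.erase i₀,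
    star (e i) ⬝ᵥ e j = if i = j then 1 else 0
  posSemidef : ∀ i, (A i).PosSemidef
  eq_vecMulVec_add : ∀ i ∈ univ.erase i₀, M i = vecMulVec (e i) (star (e i)) + A i
  eq_unlabeled : M i₀ = A i₀
  eq_compress : ∀ i, A i = (1 - ∑ k ∈ univ.erase i₀, vecMulVec (e k) (star (e k))) * A i *
    (1 - ∑ k ∈ univ.erase i₀, vecMulVec (e k) (star (e k)))
  sum_eq : ∑ i, A i = 1 - ∑ k ∈ univ.erase i₀, vecMulVec (e k) (star (e k))

section POVM

variable [Fintype ι] [DecidableEq ι] {M : ι → Matrix m m 𝕜}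

theorem mulVec_eq_zero_of_mulVec_eq_self (hM : ∀ j, (M j).PosSemidef) (hsum : ∑ j, M j = 1)
    {i j : ι} (hij : i ≠ j) {φ : m → 𝕜} (hφ : M j *ᵥ φ = φ) : M i *ᵥ φ = 0 := by
  have hrest : ∑ k ∈ univ.erase j, star φ ⬝ᵥ M k *ᵥ φ = 0 := by
    have htotal : ∑ k, star φ ⬝ᵥ M k *ᵥ φ = star φ ⬝ᵥ M j *ᵥ φ := by
      rw [← dotProduct_sum, ← sum_mulVec, hsum, one_mulVec, hφ]
    rwa [← add_sum_erase _ _ (mem_univ j), add_eq_left] at htotal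
  rw [← (hM i).dotProduct_mulVec_zero_iff]
  exact (sum_eq_zero_iff_of_nonneg fun k _ => (hM k).dotProduct_mulVec_nonneg φ).1 hrest i
    (mem_erase.2 ⟨hij, mem_univ i⟩)

theorem isLabeledDecomposition_of_mulVec_eq_self (hM : ∀ j, (M j).PosSemidef)
    (hsum : ∑ j, M j = 1) {i₀ : ι} {e : ι → m → 𝕜} (he : ∀ i, M i *ᵥ e i = e i)
    (hunit : ∀ i ≠ i₀, star (e i) ⬝ᵥ e i = 1) (he₀ : e i₀ = 0) :
    IsLabeledDecomposition M i₀ e fun i => M i - vecMulVec (e i) (star (e i)) := by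
  have horth : ∀ i j, i ≠ j → star (e i) ⬝ᵥ e j = 0 := fun i j hij =>
    (hM i).isHermitian.star_dotProduct_eq_zero (he i)
      (mulVec_eq_zero_of_mulVec_eq_self hM hsum hij (he j))
  have hkill : ∀ i, ∀ k ≠ i₀, (M i - vecMulVec (e i) (star (e i))) *ᵥ e k = 0 := by
    intro i k hk
    rw [sub_mulVec, vecMulVec_mulVec]
    obtain rfl | hik := eq_or_ne i k
    · rw [he, hunit i hk, MulOpposite.op_one, one_smul, sub_self]
    · rw [mulVec_eq_zero_of_mulVec_eq_self hM hsum hik (he k), horth i k hik,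
        MulOpposite.op_zero, zero_smul, sub_self]
  have hpsd : ∀ i, (M i - vecMulVec (e i) (star (e i))).PosSemidef := by
    intro i
    obtain rfl | hi := eq_or_ne i i₀
    · simpa [he₀] using hM i
    · exact (hM i).sub_vecMulVec_of_mulVec_eq_self (he i) (hunit i hi)
  refine ⟨?_, hpsd, fun i _ => (add_sub_cancel _ _).symm, by simp [he₀],
    fun i => (hpsd i).isHermitian.eq_one_sub_sum_vecMulVec_mul_mul
      fun k hk => hkill i k (ne_of_mem_erase hk), ?_⟩
  · intro i hi j hj
    split_ifs with hij
    · exact hij ▸ hunit i (ne_of_mem_erase hi)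
    · exact horth i j hij
  · rw [sum_sub_distrib, hsum, sum_erase _ (by simp [he₀])]

theorem exists_isLabeledDecomposition (hM : ∀ j, (M j).PosSemidef) (hsum : ∑ j, M j = 1)
    {i₀ : ι} (h : ∀ i ≠ i₀, ∃ φ, φ ≠ 0 ∧ M i *ᵥ φ = φ) :
    ∃ e A, IsLabeledDecomposition M i₀ e A := by
  have hunit : ∀ i ≠ i₀, ∃ v, M i *ᵥ v = v ∧ star v ⬝ᵥ v = 1 := by
    intro i hi
    obtain ⟨φ, hφ0, hφ⟩ := h i hi
    obtain ⟨c, hc⟩ := exists_smul_star_dotProduct_eq_one hφ0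
    exact ⟨c • φ, by rw [mulVec_smul, hφ], hc⟩
  choose! v hv hv_unit using hunit
  refine ⟨Function.update v i₀ 0, _,
    isLabeledDecomposition_of_mulVec_eq_self hM hsum (fun i => ?_) (fun i hi => ?_)
      (Function.update_self ..)⟩
  · obtain rfl | hi := eq_or_ne i i₀
    · simp
    · simp [hi, hv i hi]
  · simpa [hi] using hv_unit i hi

theorem IsLabeledDecomposition.mulVec_eq_self {e : ι → m → 𝕜} {A : ι → Matrix m m 𝕜}
    {i₀ : ι} (h : IsLabeledDecomposition M i₀ e A) {i : ι} (hi : i ∈ univ.erase i₀) :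
    M i *ᵥ e i = e i := by
  have hA : A i *ᵥ e i = 0 := by
    rw [h.eq_compress i, ← mulVec_mulVec, sub_mulVec, one_mulVec,
      sum_vecMulVec_mulVec_of_orthonormal h.orthonormal hi, sub_self, mulVec_zero]
  rw [h.eq_vecMulVec_add i hi, add_mulVec, hA, add_zero, vecMulVec_mulVec,
    h.orthonormal i hi i hi, if_pos rfl, MulOpposite.op_one, one_smul]

theorem IsLabeledDecomposition.ne_zero {e : ι → m → 𝕜} {A : ι → Matrix m m 𝕜} {i₀ : ι}
    (h : IsLabeledDecomposition M i₀ e A) {i : ι} (hi : i ∈ univ.erase i₀) : e i ≠ 0 := by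
  intro h0
  simpa [h0] using h.orthonormal i hi i hi

end POVM

theorem perfectly_labelable_parametrization_general
    {d n : ℕ} (hn2 : 2 ≤ n)
    (M : Fin n → Matrix (Fin d) (Fin d) ℂ)
    (hM : ∀ j, (M j).PosSemidef) (hsum : ∑ j, M j = 1) :
    (∃ S : Finset (Fin n), n - 1 ≤ S.card ∧ ∀ i ∈ S,
        ∃ φ : Fin d → ℂ, φ ≠ 0 ∧ (M i).mulVec φ = φ) ↔
    (∃ (i₀ : Fin n) (e : Fin n → (Fin d → ℂ)) (A : Fin n → Matrix (Fin d) (Fin d) ℂ),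
        (∀ i ∈ Finset.univ.erase i₀, ∀ j ∈ Finset.univ.erase i₀,
            star (e i) ⬝ᵥ e j = if i = j then 1 else 0) ∧
        (∀ i, (A i).PosSemidef) ∧
        (∀ i ∈ Finset.univ.erase i₀, M i = vecMulVec (e i) (star (e i)) + A i) ∧
        M i₀ = A i₀ ∧
        (∀ i, A i = (1 - ∑ k ∈ Finset.univ.erase i₀, vecMulVec (e k) (star (e k))) *
            A i * (1 - ∑ k ∈ Finset.univ.erase i₀, vecMulVec (e k) (star (e k)))) ∧
        (∑ i, A i = 1 - ∑ k ∈ Finset.univ.erase i₀, vecMulVec (e k) (star (e k)))) := by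
  have : Nonempty (Fin n) := ⟨⟨0, by omega⟩⟩
  constructor
  · rintro ⟨S, hS, hS_eig⟩
    obtain ⟨i₀, hi₀⟩ :=
      exists_univ_erase_subset_of_card_sub_one_le (S := S) (by simpa using hS)
    obtain ⟨e, A, h⟩ := exists_isLabeledDecomposition hM hsum fun i hi =>
      hS_eig i (hi₀ (mem_erase.2 ⟨hi, mem_univ i⟩))
    exact ⟨i₀, e, A, h.orthonormal, h.posSemidef, h.eq_vecMulVec_add, h.eq_unlabeled,
      h.eq_compress, h.sum_eq⟩
  · rintro ⟨i₀, e, A, h₁, h₂, h₃, h₄, h₅, h₆⟩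
    have h : IsLabeledDecomposition M i₀ e A := ⟨h₁, h₂, h₃, h₄, h₅, h₆⟩
    exact ⟨univ.erase i₀, by simp, fun i hi => ⟨e i, h.ne_zero hi, h.mulVec_eq_self hi⟩⟩

/-- Parametrization of perfectly labelable `n`-effect observables on `ℂ^d` (`d ≥ n`):
an observable is perfectly labelable (at least `n − 1` effects admit an eigenvector
with eigenvalue `1`) if and only if, for some distinguished index `i₀` (the unlabeled
effect) and an orthonormal family `{e_i}_{i ≠ i₀}` spanning an `(n−1)`-dimensional
subspace `H_{n−1}`, we have `M_i = |e_i⟩⟨e_i| + A_i` for `i ≠ i₀` and `M_{i₀} = A_{i₀}`,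
where each `A_i ≥ 0` is supported on the orthogonal complement of `H_{n−1}` and
`∑ i, A_i` is the identity on that complement (i.e. equals `𝟙 − P` with
`P = ∑_{i ≠ i₀} |e_i⟩⟨e_i|`). -/
theorem perfectly_labelable_parametrization
    {d n : ℕ} (hn2 : 2 ≤ n) (hnd : n ≤ d)
    (M : Fin n → Matrix (Fin d) (Fin d) ℂ)
    (hM : ∀ j, (M j).PosSemidef) (hsum : ∑ j, M j = 1) :
    (∃ S : Finset (Fin n), n - 1 ≤ S.card ∧ ∀ i ∈ S,
        ∃ φ : Fin d → ℂ, φ ≠ 0 ∧ (M i).mulVec φ = φ) ↔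
    (∃ (i₀ : Fin n) (e : Fin n → (Fin d → ℂ)) (A : Fin n → Matrix (Fin d) (Fin d) ℂ),
        (∀ i ∈ Finset.univ.erase i₀, ∀ j ∈ Finset.univ.erase i₀,
            star (e i) ⬝ᵥ e j = if i = j then 1 else 0) ∧
        (∀ i, (A i).PosSemidef) ∧
        (∀ i ∈ Finset.univ.erase i₀, M i = vecMulVec (e i) (star (e i)) + A i) ∧
        M i₀ = A i₀ ∧
        (∀ i, A i = (1 - ∑ k ∈ Finset.univ.erase i₀, vecMulVec (e k) (star (e k))) *
            A i * (1 - ∑ k ∈ Finset.univ.erase i₀, vecMulVec (e k) (star (e k)))) ∧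
        (∑ i, A i = 1 - ∑ k ∈ Finset.univ.erase i₀, vecMulVec (e k) (star (e k)))) :=
  perfectly_labelable_parametrization_general hn2 M hM hsum
end
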